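/- arXiv:math-ph/0611017 — 3 statements merged into one kernel-verified Lean document; each statement's English description precedes it below -/
import Mathlib

section
/- Let d ≥ 1 and L ≥ 2 be integers, let Λ = (ℤ/2Lℤ)^d be the discrete torus of side 2L, and let N = (2L)^d be its cardinality. Let ε > 0, δ ≥ 0, J ≥ 0, and let μ be a Borel probability measure on C for which there exists a Borel set B ⊆ C with μ(B) ≥ e^{−δ} and with ω(τ) ≥ √ε for every ω ∈ B and every τ ∈ [0,1]. Then (1/N) · log ∫_{C^Λ} exp( J · Y_Λ(ω_Λ) ) ∏_{ℓ∈Λ} μ(dω_ℓ) ≥ d (J ε − δ), where the integral is taken with respect to the product measure μ^{⊗Λ} (and the inequality holds trivially if the integral is +∞). -/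
open MeasureTheory ENNReal

noncomputable section

/-- The space `C` of continuous paths `ω : [0,1] → ℝ` with `ω 0 = ω 1`. -/
abbrev PathSpace : Type := {ω : C(unitInterval, ℝ) // ω 0 = ω 1}

instance : MeasurableSpace PathSpace := borel PathSpace

/-- The discrete torus `Λ = (ℤ/2Lℤ)^d`. -/
abbrev Torus (d L : ℕ) : Type := Fin d → ZMod (2 * L)

/-- Nearest-neighbor relation on the torus: `ℓ - ℓ' = ± e_j` for some coordinate `j`. -/
def isNN {d L : ℕ} (ℓ ℓ' : Torus d L) : Prop :=
  ∃ j : Fin d, ℓ - ℓ' = Pi.single j 1 ∨ ℓ' - ℓ = Pi.single j 1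

/-- `Y(ω, ω') = ∫₀¹ ω(τ) ω'(τ) dτ`. -/
def Ypair (ω ω' : PathSpace) : ℝ := ∫ τ : unitInterval, ω.1 τ * ω'.1 τ

open Classical in
/-- `Y_Λ(ω_Λ) = (1/2) Σ_{ℓ,ℓ' nearest neighbors} Y(ω_ℓ, ω_{ℓ'})`, the sum over ordered pairs. -/
def YLam (d L : ℕ) [NeZero (2 * L)] (ωΛ : Torus d L → PathSpace) : ℝ :=
  (1 / 2) * ∑ ℓ : Torus d L, ∑ ℓ' : Torus d L,
    if isNN ℓ ℓ' then Ypair (ωΛ ℓ) (ωΛ ℓ') else 0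

/-!
On the event that every `ω_ℓ` lies in `B`, each bond contributes `Y(ω_ℓ, ω_ℓ') ≥ ε`. Since
`2L > 2`, the sites `ℓ ± e_j` are `2d` distinct nearest neighbours, so `Y_Λ ≥ N d ε` there.
Restricting the integral to this event, whose `μ^{⊗Λ}`-measure is `μ(B)^N ≥ e^{-Nδ}`, gives
`∫ ≥ e^{JNdε - Nδ} ≥ e^{Nd(Jε - δ)}`, the last step because `δ ≤ dδ`.
-/

lemma mul_prod_measure_le_lintegral_pi {ι : Type*} [Fintype ι] {α : ι → Type*}
    [∀ i, MeasurableSpace (α i)] (μ : ∀ i, Measure (α i)) [∀ i, SigmaFinite (μ i)]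
    {B : ∀ i, Set (α i)} (hB : ∀ i, MeasurableSet (B i)) {f : (∀ i, α i) → ℝ≥0∞} {c : ℝ≥0∞}
    (hf : ∀ x, (∀ i, x i ∈ B i) → c ≤ f x) :
    c * ∏ i, μ i (B i) ≤ ∫⁻ x, f x ∂Measure.pi μ := by
  calc c * ∏ i, μ i (B i) = ∫⁻ _ in Set.univ.pi B, c ∂Measure.pi μ := by
        rw [setLIntegral_const, Measure.pi_pi]
  _ ≤ ∫⁻ x in Set.univ.pi B, f x ∂Measure.pi μ :=
        setLIntegral_mono' (.univ_pi hB) fun x hx => hf x fun i => hx i trivial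
  _ ≤ ∫⁻ x, f x ∂Measure.pi μ := setLIntegral_le_lintegral _ _

lemma Real.le_mul_self_sqrt (ε : ℝ) : ε ≤ √ε * √ε := by
  rcases le_total 0 ε with h | h
  · rw [Real.mul_self_sqrt h]
  · rw [Real.sqrt_eq_zero'.2 h]
    simpa using h

lemma le_Ypair {ε : ℝ} {ω ω' : PathSpace}
    (h : ∀ τ, √ε ≤ ω.1 τ) (h' : ∀ τ, √ε ≤ ω'.1 τ) : ε ≤ Ypair ω ω' := by
  have hpt : ∀ τ, ε ≤ ω.1 τ * ω'.1 τ := fun τ =>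
    (Real.le_mul_self_sqrt ε).trans <|
      mul_le_mul (h τ) (h' τ) (Real.sqrt_nonneg _) ((Real.sqrt_nonneg _).trans (h τ))
  have hint : Integrable (fun τ : unitInterval => ω.1 τ * ω'.1 τ) :=
    (ω.1.continuous.mul ω'.1.continuous).integrable_of_hasCompactSupport
      (HasCompactSupport.of_compactSpace _)
  calc ε = ∫ _ : unitInterval, ε := by simp
  _ ≤ Ypair ω ω' := integral_mono (integrable_const ε) hint hpt

section Neighbors

variable {R : Type*} [CommRing R] {d : ℕ}

def latticeNeighbor (ℓ : Fin d → R) (x : Fin d × Bool) : Fin d → R :=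
  ℓ + Pi.single x.1 (if x.2 then 1 else -1)

lemma latticeNeighbor_injective (h2 : (2 : R) ≠ 0) (ℓ : Fin d → R) :
    Function.Injective (latticeNeighbor ℓ) := by
  have h1 : (1 : R) ≠ 0 := fun h => h2 (by rw [← one_add_one_eq_two, h, add_zero])
  have hsign : ∀ b : Bool, (if b then 1 else -1 : R) ≠ 0 := by
    rintro (_ | _) <;> simp [h1]
  rintro ⟨j, b⟩ ⟨k, c⟩ hjk
  have hj := congrFun (add_left_cancel hjk) j
  obtain rfl : j = k := by
    by_contra hne
    simp [Ne.symm hne, hsign b] at hj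
  have h1_ne_neg : (1 : R) ≠ -1 := fun h => h2 (by linear_combination h)
  obtain rfl : b = c := by
    rcases b <;> rcases c <;> simp [h1_ne_neg, h1_ne_neg.symm] at hj ⊢
  rfl

end Neighbors

lemma ZMod.two_ne_zero_of_two_le {L : ℕ} (hL : 2 ≤ L) : (2 : ZMod (2 * L)) ≠ 0 := by
  intro h
  have := Nat.le_of_dvd two_pos ((ZMod.natCast_eq_zero_iff 2 (2 * L)).1 (by exact_mod_cast h))
  omega

lemma isNN_iff_mem_range_latticeNeighbor {d L : ℕ} (ℓ ℓ' : Torus d L) :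
    isNN ℓ ℓ' ↔ ℓ' ∈ Set.range (latticeNeighbor ℓ) := by
  constructor
  · rintro ⟨j, h | h⟩
    · exact ⟨(j, false), by simp [latticeNeighbor, Pi.single_neg, ← h]⟩
    · exact ⟨(j, true), by simp [latticeNeighbor, ← h]⟩
  · rintro ⟨⟨j, b⟩, rfl⟩
    refine ⟨j, ?_⟩
    cases b <;> simp [latticeNeighbor, Pi.single_neg]

open Classical in
lemma YLam_eq_sum_latticeNeighbor (d L : ℕ) (hL : 2 ≤ L) [NeZero (2 * L)]
    (ωΛ : Torus d L → PathSpace) :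
    YLam d L ωΛ =
      (1 / 2) * ∑ ℓ, ∑ x : Fin d × Bool, Ypair (ωΛ ℓ) (ωΛ (latticeNeighbor ℓ x)) := by
  rw [YLam]
  congr 1
  refine Finset.sum_congr rfl fun ℓ _ => ?_
  rw [← Finset.sum_filter]
  have hfilter : Finset.univ.filter (isNN ℓ) = Finset.univ.image (latticeNeighbor ℓ) := by
    ext ℓ'
    simp [isNN_iff_mem_range_latticeNeighbor]
  rw [hfilter, Finset.sum_image fun x _ y _ h =>
    latticeNeighbor_injective (ZMod.two_ne_zero_of_two_le hL) ℓ h]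

lemma card_torus (d L : ℕ) [NeZero (2 * L)] : Fintype.card (Torus d L) = (2 * L) ^ d := by
  simp [Torus, ZMod.card]

lemma le_YLam (d L : ℕ) (hL : 2 ≤ L) [NeZero (2 * L)] {ε : ℝ} (ωΛ : Torus d L → PathSpace)
    (h : ∀ ℓ τ, √ε ≤ (ωΛ ℓ).1 τ) : (((2 * L) ^ d : ℕ) : ℝ) * (d * ε) ≤ YLam d L ωΛ := by
  rw [YLam_eq_sum_latticeNeighbor d L hL]
  have hsum := Finset.sum_le_sum fun ℓ (_ : ℓ ∈ Finset.univ) =>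
    Finset.sum_le_sum fun x (_ : x ∈ Finset.univ) => le_Ypair (h ℓ) (h (latticeNeighbor ℓ x))
  simp only [Finset.sum_const, Finset.card_univ, card_torus, Fintype.card_prod, Fintype.card_fin,
    Fintype.card_bool, nsmul_eq_mul] at hsum
  push_cast at hsum ⊢
  linarith

theorem pressure_lower_bound_general (d L : ℕ) (hd : 1 ≤ d) (hL : 2 ≤ L) [NeZero (2 * L)]
    (ε δ J : ℝ) (hδ : 0 ≤ δ) (hJ : 0 ≤ J)
    (μ : Measure PathSpace) (hμ : IsProbabilityMeasure μ)
    (B : Set PathSpace) (hBm : MeasurableSet B)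
    (hμB : ENNReal.ofReal (Real.exp (-δ)) ≤ μ B)
    (hBpos : ∀ ω ∈ B, ∀ τ : unitInterval, Real.sqrt ε ≤ ω.1 τ) :
    ENNReal.ofReal (Real.exp ((((2 * L) ^ d : ℕ) : ℝ) * (d * (J * ε - δ))))
      ≤ ∫⁻ ωΛ : Torus d L → PathSpace,
          ENNReal.ofReal (Real.exp (J * YLam d L ωΛ)) ∂(Measure.pi fun _ => μ) := by
  set N : ℕ := (2 * L) ^ d
  have hrestrict := mul_prod_measure_le_lintegral_pi (fun _ : Torus d L => μ) (fun _ => hBm)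
    (c := ENNReal.ofReal (Real.exp (J * (N * (d * ε)))))
    (f := fun ωΛ => ENNReal.ofReal (Real.exp (J * YLam d L ωΛ))) fun ωΛ hωΛ =>
      ENNReal.ofReal_le_ofReal <| Real.exp_le_exp.2 <|
        mul_le_mul_of_nonneg_left (le_YLam d L hL ωΛ fun ℓ => hBpos _ (hωΛ ℓ)) hJ
  rw [Finset.prod_const, Finset.card_univ, card_torus] at hrestrict
  refine le_trans ?_ hrestrict
  have hδd : (N : ℝ) * δ ≤ N * (d * δ) := by
    gcongr
    exact le_mul_of_one_le_left hδ (by exact_mod_cast hd)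
  calc ENNReal.ofReal (Real.exp (N * (d * (J * ε - δ))))
      ≤ ENNReal.ofReal (Real.exp (J * (N * (d * ε)))) * ENNReal.ofReal (Real.exp (-δ)) ^ N := by
        rw [← ENNReal.ofReal_pow (Real.exp_nonneg _), ← Real.exp_nat_mul,
          ← ENNReal.ofReal_mul (Real.exp_nonneg _), ← Real.exp_add]
        gcongr
        linarith
  _ ≤ _ := by gcongr

/-- Path-measure form of Lemma 1 of the paper (the analog of Lemma 3.4 of
Fröhlich–Simon–Spencer): `(1/N) log ∫ exp(J Y_Λ) dμ^{⊗Λ} ≥ d (Jε - δ)`, stated in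
`[0,∞]` by exponentiating both sides (so it holds trivially if the integral is `+∞`). -/
theorem pressure_lower_bound (d L : ℕ) (hd : 1 ≤ d) (hL : 2 ≤ L) [NeZero (2 * L)]
    (ε δ J : ℝ) (hε : 0 < ε) (hδ : 0 ≤ δ) (hJ : 0 ≤ J)
    (μ : Measure PathSpace) (hμ : IsProbabilityMeasure μ)
    (B : Set PathSpace) (hBm : MeasurableSet B)
    (hμB : ENNReal.ofReal (Real.exp (-δ)) ≤ μ B)
    (hBpos : ∀ ω ∈ B, ∀ τ : unitInterval, Real.sqrt ε ≤ ω.1 τ) :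
    ENNReal.ofReal (Real.exp ((((2 * L) ^ d : ℕ) : ℝ) * (d * (J * ε - δ))))
      ≤ ∫⁻ ωΛ : Torus d L → PathSpace,
          ENNReal.ofReal (Real.exp (J * YLam d L ωΛ)) ∂(Measure.pi fun _ => μ) :=
  pressure_lower_bound_general d L hd hL ε δ J hδ hJ μ hμ B hBm hμB hBpos
end
end

section
/- Let d ≥ 1 and L ≥ 2 be integers, Λ = (ℤ/2Lℤ)^d the discrete torus of side 2L, N = (2L)^d, and J > 0. Let ν be a Borel probability measure on C such that ∫_C exp( t ∫₀¹ ω(τ)² dτ ) ν(dω) < ∞ for every t > 0. Define Z(J) := ∫_{C^Λ} exp( J · Y_Λ(ω_Λ) ) ν^{⊗Λ}(dω_Λ) and the Gibbs probability measure μ_J(dω_Λ) := exp( J · Y_Λ(ω_Λ) ) ν^{⊗Λ}(dω_Λ) / Z(J). Then (1/N) Σ_{ℓ∈Λ} ∫_{C^Λ} ( ∫₀¹ ω_ℓ(τ)² dτ ) μ_J(dω_Λ) ≥ log Z(J) / (J · d · N). -/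
open MeasureTheory ENNReal

noncomputable section

/-- The partition function `Z(J) = ∫ exp(J Y_Λ) dν^{⊗Λ}`. -/
def Zfun (d L : ℕ) [NeZero (2 * L)] (ν : Measure PathSpace) (J : ℝ) : ℝ :=
  ∫ ωΛ : Torus d L → PathSpace, Real.exp (J * YLam d L ωΛ) ∂(Measure.pi fun _ => ν)

/-- The Gibbs probability measure `μ_J = Z(J)⁻¹ exp(J Y_Λ) ν^{⊗Λ}`. -/
def gibbs (d L : ℕ) [NeZero (2 * L)] (ν : Measure PathSpace) (J : ℝ) :
    Measure (Torus d L → PathSpace) :=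
  (Measure.pi fun _ => ν).withDensity
    (fun ωΛ => ENNReal.ofReal (Real.exp (J * YLam d L ωΛ) / Zfun d L ν J))

/-!
The Gibbs measure is the tilt of `ν^{⊗Λ}` by `J Y_Λ`, so nonnegativity of its relative entropy
with respect to `ν^{⊗Λ}` gives `log Z(J) ≤ J ∫ Y_Λ dμ_J`; this is the convexity bound
`log Z(J) ≤ J (log Z)'(J)`. Since `|Y(ω, ω')| ≤ (X ω + X ω') / 2` with `X ω = ∫₀¹ ω²` and every
site has `2d` nearest neighbours, `|Y_Λ| ≤ d Σ_ℓ X(ω_ℓ)`. This bounds `J ∫ Y_Λ dμ_J` by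
`J d Σ_ℓ ∫ X(ω_ℓ) dμ_J`, and, together with the exponential moments of `X`, makes every
integrand integrable.
-/
open Real Finset

instance : BorelSpace PathSpace := ⟨rfl⟩

section ContinuousIntegral

variable {K : Type*} [TopologicalSpace K] [CompactSpace K] [MeasurableSpace K]
  [OpensMeasurableSpace K] (μ : Measure K) [IsFiniteMeasure μ]

lemma continuous_integral_continuousMap : Continuous fun f : C(K, ℝ) => ∫ x, f x ∂μ := by
  have hint (f : C(K, ℝ)) : Integrable f μ := (BoundedContinuousFunction.mkOfCompact f).integrable μ
  refine (LipschitzWith.of_dist_le_mul fun f g => ?_).continuous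
    (K := ⟨μ.real Set.univ, by positivity⟩)
  rw [dist_eq_norm, dist_eq_norm, ← integral_sub (hint f) (hint g), mul_comm]
  exact norm_integral_le_of_norm_le_const
    (Filter.Eventually.of_forall fun x => (f - g).norm_coe_le_norm x)

end ContinuousIntegral

def l2NormSq (ω : PathSpace) : ℝ := ∫ τ : unitInterval, (ω.1 τ) ^ 2

lemma l2NormSq_nonneg (ω : PathSpace) : 0 ≤ l2NormSq ω :=
  integral_nonneg fun _ => sq_nonneg _

lemma continuous_l2NormSq : Continuous l2NormSq :=
  (continuous_integral_continuousMap volume).comp (continuous_subtype_val.pow 2)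

lemma continuous_Ypair : Continuous fun p : PathSpace × PathSpace => Ypair p.1 p.2 :=
  (continuous_integral_continuousMap volume).comp
    ((continuous_subtype_val.comp continuous_fst).mul (continuous_subtype_val.comp continuous_snd))

lemma abs_Ypair_le (ω ω' : PathSpace) : |Ypair ω ω'| ≤ (l2NormSq ω + l2NormSq ω') / 2 := by
  have hint (f : C(unitInterval, ℝ)) : Integrable f :=
    (BoundedContinuousFunction.mkOfCompact f).integrable _
  have hsq (ω : PathSpace) : Integrable fun τ => (ω.1 τ) ^ 2 := hint (ω.1 ^ 2)
  calc |Ypair ω ω'| ≤ ∫ τ : unitInterval, |ω.1 τ * ω'.1 τ| := abs_integral_le_integral_abs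
    _ ≤ ∫ τ : unitInterval, ((ω.1 τ) ^ 2 + (ω'.1 τ) ^ 2) / 2 := by
      refine integral_mono (hint (ω.1 * ω'.1)).abs
        (((hsq ω).add (hsq ω')).div_const 2) fun τ => ?_
      rw [abs_mul]
      nlinarith [sq_nonneg (|ω.1 τ| - |ω'.1 τ|), sq_abs (ω.1 τ), sq_abs (ω'.1 τ)]
    _ = (l2NormSq ω + l2NormSq ω') / 2 := by
      rw [integral_div, integral_add (hsq ω) (hsq ω')]
      rfl

section Integrability

variable {α : Type*} [MeasurableSpace α] {μ : Measure α}

lemma integrable_exp_mul_sum_pi {ι β : Type*} [Fintype ι] [MeasurableSpace β] {ν : Measure β}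
    [SigmaFinite ν] {f : β → ℝ} {t : ℝ} (h : Integrable (fun y => exp (t * f y)) ν) :
    Integrable (fun x : ι → β => exp (t * ∑ i, f (x i))) (Measure.pi fun _ => ν) := by
  simp_rw [mul_sum, exp_sum]
  exact Integrable.fintype_prod fun _ => h

lemma integrable_exp_mul_of_abs_le {V H g : α → ℝ} {c C : ℝ}
    (hV : Integrable (fun x => exp ((1 + c) * V x)) μ)
    (hH : AEStronglyMeasurable H μ) (hg : AEStronglyMeasurable g μ)
    (hHV : ∀ x, H x ≤ c * V x) (hgV : ∀ x, |g x| ≤ C * exp (V x)) :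
    Integrable (fun x => exp (H x) * g x) μ := by
  refine (hV.const_mul C).mono' ((continuous_exp.comp_aestronglyMeasurable hH).mul hg)
    (Filter.Eventually.of_forall fun x => ?_)
  calc ‖exp (H x) * g x‖ = exp (H x) * |g x| := by
        rw [norm_mul, Real.norm_of_nonneg (exp_pos _).le, Real.norm_eq_abs]
    _ ≤ exp (c * V x) * (C * exp (V x)) :=
        mul_le_mul (exp_le_exp.2 (hHV x)) (hgV x) (abs_nonneg _) (exp_pos _).le
    _ = C * exp ((1 + c) * V x) := by rw [mul_left_comm, ← exp_add]; ring_nf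

/-- Gibbs' variational inequality: the relative entropy of the tilted measure is nonnegative. -/
lemma log_integral_exp_le_integral_tilted [IsProbabilityMeasure μ] {H : α → ℝ}
    (hexp : Integrable (fun x => exp (H x)) μ) (hH : Integrable H (μ.tilted H)) :
    log (∫ x, exp (H x) ∂μ) ≤ ∫ x, H x ∂μ.tilted H := by
  have : IsProbabilityMeasure (μ.tilted H) := isProbabilityMeasure_tilted hexp
  have hac := tilted_absolutelyContinuous μ H
  have hllr : llr (μ.tilted H) μ =ᵐ[μ.tilted H] fun x => H x - log (∫ x, exp (H x) ∂μ) :=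
    hac.ae_eq (log_rnDeriv_tilted_left_self hexp)
  have hnonneg := InformationTheory.integral_llr_add_sub_measure_univ_nonneg hac
    ((hH.sub (integrable_const _)).congr hllr.symm)
  rw [integral_congr_ae hllr, integral_sub hH (integrable_const _)] at hnonneg
  simpa using hnonneg

end Integrability

section Torus

variable {d L : ℕ}

lemma isNN_comm {ℓ ℓ' : Torus d L} : isNN ℓ ℓ' ↔ isNN ℓ' ℓ :=
  exists_congr fun _ => or_comm

lemma isNN_iff_exists_eq_add_single (ℓ ℓ' : Torus d L) :
    isNN ℓ ℓ' ↔ ∃ p : Fin d × Bool, ℓ' = ℓ + Pi.single p.1 (if p.2 then 1 else -1) := by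
  simp only [isNN, Prod.exists, Bool.exists_bool, if_false, if_true, Bool.false_eq_true,
    Pi.single_neg, ← sub_eq_add_neg]
  refine exists_congr fun j => or_congr ?_ ?_
  · rw [sub_eq_iff_eq_add, eq_sub_iff_add_eq, add_comm, eq_comm]
  · rw [sub_eq_iff_eq_add']

open Classical in
lemma card_filter_isNN [NeZero (2 * L)] (hL : 2 ≤ L) (ℓ : Torus d L) :
    #{ℓ' | isNN ℓ ℓ'} = 2 * d := by
  have : Fact (1 < 2 * L) := ⟨by omega⟩
  have : Fact (2 < 2 * L) := ⟨by omega⟩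
  have hsign (b : Bool) : (if b then 1 else -1 : ZMod (2 * L)) ≠ 0 := by
    cases b <;> simp
  have hinj : Function.Injective fun p : Fin d × Bool =>
      ℓ + Pi.single p.1 (if p.2 then 1 else -1) := by
    rintro ⟨j, b⟩ ⟨k, c⟩ h
    have hjk := congrFun (add_left_cancel h) j
    obtain rfl : j = k := by
      by_contra hne
      simp only [Pi.single_eq_same, Pi.single_eq_of_ne hne] at hjk
      exact hsign b hjk
    cases b <;> cases c <;> simp_all [ZMod.neg_one_ne_one, ZMod.neg_one_ne_one.symm]
  have himage : ({ℓ' | isNN ℓ ℓ'} : Finset (Torus d L)) = univ.image fun p : Fin d × Bool =>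
      ℓ + Pi.single p.1 (if p.2 then 1 else -1) := by
    ext ℓ'
    simp only [mem_filter, mem_univ, true_and, mem_image, isNN_iff_exists_eq_add_single]
    exact exists_congr fun _ => eq_comm
  rw [himage, card_image_of_injective _ hinj, card_univ, Fintype.card_prod, Fintype.card_fin,
    Fintype.card_bool, mul_comm]

open Classical in
lemma sum_sum_ite_isNN [NeZero (2 * L)] (hL : 2 ≤ L) (g : Torus d L → ℝ) :
    ∑ ℓ, ∑ ℓ', (if isNN ℓ ℓ' then (g ℓ + g ℓ') / 2 else 0) = 2 * d * ∑ ℓ, g ℓ := by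
  have hleft : ∑ ℓ : Torus d L, ∑ ℓ', (if isNN ℓ ℓ' then g ℓ else 0) = 2 * d * ∑ ℓ, g ℓ := by
    simp_rw [← sum_filter, sum_const, card_filter_isNN hL, nsmul_eq_mul, mul_sum]
    push_cast
    rfl
  have hright : ∑ ℓ : Torus d L, ∑ ℓ', (if isNN ℓ ℓ' then g ℓ' else 0) = 2 * d * ∑ ℓ, g ℓ := by
    rw [sum_comm, ← hleft]
    simp_rw [isNN_comm]
  have hsplit (ℓ ℓ' : Torus d L) : (if isNN ℓ ℓ' then (g ℓ + g ℓ') / 2 else 0)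
      = ((if isNN ℓ ℓ' then g ℓ else 0) + (if isNN ℓ ℓ' then g ℓ' else 0)) / 2 := by
    split_ifs <;> ring
  simp_rw [hsplit, ← sum_div, sum_add_distrib, hleft, hright]
  ring

end Torus

section Energy

variable {d L : ℕ} [NeZero (2 * L)]

def totalL2NormSq (ωΛ : Torus d L → PathSpace) : ℝ := ∑ ℓ, l2NormSq (ωΛ ℓ)

lemma totalL2NormSq_nonneg (ωΛ : Torus d L → PathSpace) : 0 ≤ totalL2NormSq ωΛ :=
  sum_nonneg fun ℓ _ => l2NormSq_nonneg (ωΛ ℓ)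

lemma totalL2NormSq_le_exp (ωΛ : Torus d L → PathSpace) :
    totalL2NormSq ωΛ ≤ exp (totalL2NormSq ωΛ) := by
  linarith [add_one_le_exp (totalL2NormSq ωΛ)]

lemma measurable_YLam : Measurable (YLam d L) := by
  classical
  refine (Finset.measurable_sum _ fun ℓ _ => Finset.measurable_sum _ fun ℓ' _ => ?_).const_mul _
  refine Measurable.ite (MeasurableSet.const _) ?_ measurable_const
  have hpair : Continuous fun ωΛ : Torus d L → PathSpace => (ωΛ ℓ, ωΛ ℓ') := by fun_prop
  exact (continuous_Ypair.comp hpair).measurable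

lemma abs_YLam_le (hL : 2 ≤ L) (ωΛ : Torus d L → PathSpace) :
    |YLam d L ωΛ| ≤ d * totalL2NormSq ωΛ := by
  classical
  calc |YLam d L ωΛ|
      ≤ 1 / 2 * ∑ ℓ, ∑ ℓ', if isNN ℓ ℓ' then
          (l2NormSq (ωΛ ℓ) + l2NormSq (ωΛ ℓ')) / 2 else 0 := by
        rw [YLam, abs_mul, abs_of_pos one_half_pos]
        gcongr
        refine (abs_sum_le_sum_abs _ _).trans (sum_le_sum fun ℓ _ => ?_)
        refine (abs_sum_le_sum_abs _ _).trans (sum_le_sum fun ℓ' _ => ?_)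
        split_ifs
        · exact abs_Ypair_le _ _
        · simp
    _ = d * totalL2NormSq ωΛ := by
        rw [sum_sum_ite_isNN hL (fun ℓ => l2NormSq (ωΛ ℓ)), totalL2NormSq]
        ring

lemma mul_YLam_le (hL : 2 ≤ L) {J : ℝ} (hJ : 0 ≤ J) (ωΛ : Torus d L → PathSpace) :
    J * YLam d L ωΛ ≤ J * d * totalL2NormSq ωΛ := by
  rw [mul_assoc]
  exact mul_le_mul_of_nonneg_left ((le_abs_self _).trans (abs_YLam_le hL ωΛ)) hJ

end Energy

section GibbsIntegrability

variable {d L : ℕ} [NeZero (2 * L)] {ν : Measure PathSpace} [SigmaFinite ν] {J : ℝ}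

lemma integrable_exp_mul_YLam_mul (hL : 2 ≤ L) (hJ : 0 ≤ J)
    (hexp : ∀ t : ℝ, 0 < t → Integrable (fun ω => exp (t * l2NormSq ω)) ν)
    {g : (Torus d L → PathSpace) → ℝ} (hg : Measurable g) {C : ℝ}
    (hgC : ∀ ωΛ, |g ωΛ| ≤ C * exp (totalL2NormSq ωΛ)) :
    Integrable (fun ωΛ => exp (J * YLam d L ωΛ) * g ωΛ) (Measure.pi fun _ => ν) :=
  integrable_exp_mul_of_abs_le (c := J * d) (integrable_exp_mul_sum_pi (hexp _ (by positivity)))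
    (measurable_YLam.const_mul J).aestronglyMeasurable hg.aestronglyMeasurable
    (mul_YLam_le hL hJ) hgC

lemma integrable_exp_mul_YLam (hL : 2 ≤ L) (hJ : 0 ≤ J)
    (hexp : ∀ t : ℝ, 0 < t → Integrable (fun ω => exp (t * l2NormSq ω)) ν) :
    Integrable (fun ωΛ => exp (J * YLam d L ωΛ)) (Measure.pi fun _ => ν) := by
  simpa using integrable_exp_mul_YLam_mul hL hJ hexp (g := fun _ => 1) measurable_const (C := 1)
    fun ωΛ => by simpa using one_le_exp (totalL2NormSq_nonneg ωΛ)

lemma integrable_gibbs_of_abs_le (hL : 2 ≤ L) (hJ : 0 ≤ J)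
    (hexp : ∀ t : ℝ, 0 < t → Integrable (fun ω => exp (t * l2NormSq ω)) ν)
    {g : (Torus d L → PathSpace) → ℝ} (hg : Measurable g) {C : ℝ}
    (hgC : ∀ ωΛ, |g ωΛ| ≤ C * exp (totalL2NormSq ωΛ)) :
    Integrable g (gibbs d L ν J) :=
  (integrable_tilted_iff (integrable_exp_mul_YLam hL hJ hexp) g).2
    (by simpa using integrable_exp_mul_YLam_mul hL hJ hexp hg hgC)

lemma integrable_gibbs_l2NormSq (hL : 2 ≤ L) (hJ : 0 ≤ J)
    (hexp : ∀ t : ℝ, 0 < t → Integrable (fun ω => exp (t * l2NormSq ω)) ν) (ℓ : Torus d L) :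
    Integrable (fun ωΛ => l2NormSq (ωΛ ℓ)) (gibbs d L ν J) :=
  integrable_gibbs_of_abs_le hL hJ hexp (C := 1)
    (continuous_l2NormSq.measurable.comp (measurable_pi_apply ℓ)) fun ωΛ => by
      rw [abs_of_nonneg (l2NormSq_nonneg _), one_mul]
      exact (single_le_sum (fun m _ => l2NormSq_nonneg (ωΛ m)) (mem_univ ℓ)).trans
        (totalL2NormSq_le_exp ωΛ)

lemma integrable_gibbs_mul_YLam (hL : 2 ≤ L) (hJ : 0 ≤ J)
    (hexp : ∀ t : ℝ, 0 < t → Integrable (fun ω => exp (t * l2NormSq ω)) ν) :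
    Integrable (fun ωΛ => J * YLam d L ωΛ) (gibbs d L ν J) :=
  integrable_gibbs_of_abs_le hL hJ hexp (C := J * d) (measurable_YLam.const_mul J) fun ωΛ => by
    rw [abs_mul, abs_of_nonneg hJ, mul_assoc]
    gcongr
    exact (abs_YLam_le hL ωΛ).trans (by gcongr; exact totalL2NormSq_le_exp ωΛ)

end GibbsIntegrability

theorem mean_square_lower_bound_general (d L : ℕ) (hL : 2 ≤ L) [NeZero (2 * L)]
    (J : ℝ) (hJ : 0 < J)
    (ν : Measure PathSpace) (hν : IsProbabilityMeasure ν)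
    (hexp : ∀ t : ℝ, 0 < t →
      Integrable (fun ω : PathSpace => Real.exp (t * ∫ τ : unitInterval, (ω.1 τ) ^ 2)) ν) :
    Real.log (Zfun d L ν J) / (J * d * (((2 * L) ^ d : ℕ) : ℝ))
      ≤ (1 / (((2 * L) ^ d : ℕ) : ℝ)) * ∑ ℓ : Torus d L,
          ∫ ωΛ : Torus d L → PathSpace,
            (∫ τ : unitInterval, ((ωΛ ℓ).1 τ) ^ 2) ∂(gibbs d L ν J) := by
  have hsite_int := integrable_gibbs_l2NormSq (d := d) (J := J) hL hJ.le hexp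
  have hH_int := integrable_gibbs_mul_YLam (d := d) hL hJ.le hexp
  have hlog : log (Zfun d L ν J) ≤ J * d * ∑ ℓ, ∫ ωΛ, l2NormSq (ωΛ ℓ) ∂gibbs d L ν J := calc
    log (Zfun d L ν J) ≤ ∫ ωΛ, J * YLam d L ωΛ ∂gibbs d L ν J :=
      log_integral_exp_le_integral_tilted (integrable_exp_mul_YLam hL hJ.le hexp) hH_int
    _ ≤ ∫ ωΛ, J * d * totalL2NormSq ωΛ ∂gibbs d L ν J :=
      integral_mono hH_int ((integrable_finsetSum _ fun ℓ _ => hsite_int ℓ).const_mul _)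
        (mul_YLam_le hL hJ.le)
    _ = J * d * ∑ ℓ, ∫ ωΛ, l2NormSq (ωΛ ℓ) ∂gibbs d L ν J := by
      unfold totalL2NormSq
      rw [integral_const_mul, integral_finsetSum _ fun ℓ _ => hsite_int ℓ]
  refine div_le_of_le_mul₀ (by positivity) (mul_nonneg (by positivity)
    (sum_nonneg fun ℓ _ => integral_nonneg fun ωΛ => l2NormSq_nonneg (ωΛ ℓ)))
    (hlog.trans_eq (by field_simp; rfl))

/-- Path-measure form of Lemma 2 of the paper: the mean squared displacement of the Gibbs
measure dominates `log Z(J) / (J d N)`. -/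
theorem mean_square_lower_bound (d L : ℕ) (hd : 1 ≤ d) (hL : 2 ≤ L) [NeZero (2 * L)]
    (J : ℝ) (hJ : 0 < J)
    (ν : Measure PathSpace) (hν : IsProbabilityMeasure ν)
    (hexp : ∀ t : ℝ, 0 < t →
      Integrable (fun ω : PathSpace => Real.exp (t * ∫ τ : unitInterval, (ω.1 τ) ^ 2)) ν) :
    Real.log (Zfun d L ν J) / (J * d * (((2 * L) ^ d : ℕ) : ℝ))
      ≤ (1 / (((2 * L) ^ d : ℕ) : ℝ)) * ∑ ℓ : Torus d L,
          ∫ ωΛ : Torus d L → PathSpace,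
            (∫ τ : unitInterval, ((ωΛ ℓ).1 τ) ^ 2) ∂(gibbs d L ν J) :=
  mean_square_lower_bound_general d L hL J hJ ν hν hexp
end
end

section
/- There exists a unique function f : [0, ∞) → ℝ with f(0) = 1 and f(ξ · tanh ξ) = (tanh ξ)/ξ for all ξ > 0. This function f is continuous, strictly decreasing on [0, ∞), takes values in (0, 1], and, for every fixed β > 0, the map t ↦ t · f(β/t) is nondecreasing on (0, ∞). -/
/-!
The map `φ ξ = ξ tanh ξ` is an order automorphism of `[0, ∞)`, and `f = g ∘ φ⁻¹` where
`g = dslope tanh 0` is `tanh ξ / ξ` extended by `tanh' 0 = 1` at the origin. Since `tanh` is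
strictly concave on `[0, ∞)` (its derivative `1 - tanh²` decreases there), its slope from the
origin `g` is strictly decreasing, whence so is `f`. For the last property, put `ξ = φ⁻¹ (β / t)`:
then `t f(β / t) = β / ξ²`, and `ξ` decreases as `t` grows.
-/

open Real Set Filter Topology

theorem Set.continuous_projIci {α : Type*} [LinearOrder α] [TopologicalSpace α]
    [OrderClosedTopology α] {a : α} : Continuous (projIci a) :=
  (continuous_const.max continuous_id).subtype_mk _

theorem StrictConcaveOn.strictAntiOn_dslope {S : Set ℝ} {f : ℝ → ℝ} {a : ℝ}
    (hf : StrictConcaveOn ℝ S f) (ha : a ∈ S) (hd : DifferentiableAt ℝ f a) :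
    StrictAntiOn (dslope f a) S := by
  intro x hx y hy hxy
  rcases eq_or_ne x a with rfl | hxa
  · rw [dslope_same, dslope_of_ne f hxy.ne']
    exact hf.slope_lt_deriv hx hy hxy hd
  rcases eq_or_ne y a with rfl | hya
  · rw [dslope_same, dslope_of_ne f hxy.ne]
    exact slope_comm f x y ▸ hf.deriv_lt_slope hx hy hxy hd
  rw [dslope_of_ne f hxa, dslope_of_ne f hya, slope_def_field, slope_def_field]
  exact hf.secant_strict_mono ha hx hy hxa hya hxy

namespace Real

theorem hasDerivAt_tanh (x : ℝ) : HasDerivAt tanh (1 - tanh x ^ 2) x := by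
  have h := (hasDerivAt_sinh x).div (hasDerivAt_cosh x) (cosh_pos x).ne'
  rw [show (sinh / cosh) = tanh from funext fun y => (tanh_eq_sinh_div_cosh y).symm] at h
  refine h.congr_deriv ?_
  rw [tanh_eq_sinh_div_cosh]
  field_simp

theorem differentiable_tanh : Differentiable ℝ tanh :=
  fun x => (hasDerivAt_tanh x).differentiableAt

theorem continuous_tanh : Continuous tanh := differentiable_tanh.continuous

theorem deriv_tanh : deriv tanh = fun x => 1 - tanh x ^ 2 :=
  funext fun x => (hasDerivAt_tanh x).deriv

theorem tanh_strictMono : StrictMono tanh :=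
  strictMono_of_deriv_pos fun x => by rw [deriv_tanh, sub_pos]; exact tanh_sq_lt_one x

theorem tanh_pos {x : ℝ} (hx : 0 < x) : 0 < tanh x := tanh_zero ▸ tanh_strictMono hx

theorem tanh_nonneg {x : ℝ} (hx : 0 ≤ x) : 0 ≤ tanh x := tanh_zero ▸ tanh_strictMono.monotone hx

theorem strictConcaveOn_tanh : StrictConcaveOn ℝ (Ici 0) tanh := by
  refine StrictAntiOn.strictConcaveOn_of_deriv (convex_Ici 0) continuous_tanh.continuousOn ?_
  rw [interior_Ici, deriv_tanh]
  intro x hx y _ hxy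
  have := tanh_strictMono hxy
  have := tanh_pos hx
  dsimp only
  nlinarith

theorem dslope_tanh_zero_of_ne {x : ℝ} (hx : x ≠ 0) : dslope tanh 0 x = tanh x / x := by
  rw [dslope_of_ne _ hx, slope_def_field, tanh_zero, sub_zero, sub_zero]

theorem dslope_tanh_zero_zero : dslope tanh 0 0 = 1 := by
  rw [dslope_same, (hasDerivAt_tanh 0).deriv, tanh_zero]; norm_num

theorem continuous_dslope_tanh : Continuous (dslope tanh 0) :=
  continuousOn_univ.1 <| (continuousOn_dslope univ_mem).2
    ⟨continuous_tanh.continuousOn, differentiable_tanh 0⟩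

theorem strictAntiOn_dslope_tanh : StrictAntiOn (dslope tanh 0) (Ici 0) :=
  strictConcaveOn_tanh.strictAntiOn_dslope self_mem_Ici (differentiable_tanh 0)

theorem dslope_tanh_pos {x : ℝ} (hx : 0 < x) : 0 < dslope tanh 0 x := by
  rw [dslope_tanh_zero_of_ne hx.ne']; exact div_pos (tanh_pos hx) hx

theorem strictMonoOn_mul_tanh : StrictMonoOn (fun x => x * tanh x) (Ici 0) := by
  intro x hx y _ hxy
  have := tanh_strictMono hxy
  have := tanh_nonneg hx
  dsimp only
  nlinarith [mem_Ici.1 hx]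

theorem tendsto_mul_tanh_atTop : Tendsto (fun x => x * tanh x) atTop atTop := by
  refine tendsto_atTop_mono' _ ?_ (tendsto_id.atTop_mul_const (tanh_pos one_pos))
  filter_upwards [eventually_ge_atTop 1] with x hx
  exact mul_le_mul_of_nonneg_left (tanh_strictMono.monotone hx) (zero_le_one.trans hx)

theorem exists_mul_tanh_eq {y : ℝ} (hy : 0 ≤ y) : ∃ x, 0 ≤ x ∧ x * tanh x = y := by
  have := intermediate_value_Ici (a := 0) (continuous_id.mul continuous_tanh).continuousOn
    tendsto_mul_tanh_atTop
  simpa using this (by simpa using hy)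

end Real

noncomputable def mulTanhOrderIso : Ici (0 : ℝ) ≃o Ici (0 : ℝ) :=
  StrictMono.orderIsoOfSurjective (fun x => ⟨x * tanh x, mul_nonneg x.2 (tanh_nonneg x.2)⟩)
    (fun x y h => strictMonoOn_mul_tanh x.2 y.2 h)
    (fun y => by
      obtain ⟨x, hx, hxy⟩ := exists_mul_tanh_eq y.2
      exact ⟨⟨x, hx⟩, Subtype.ext hxy⟩)

-- Clamping by `projIci` makes `invMulTanh` continuous on all of `ℝ`; it vanishes on `(-∞, 0]`.
noncomputable def invMulTanh (y : ℝ) : ℝ := mulTanhOrderIso.symm (projIci 0 y)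

theorem invMulTanh_nonneg (y : ℝ) : 0 ≤ invMulTanh y := (mulTanhOrderIso.symm _).2

theorem continuous_invMulTanh : Continuous invMulTanh :=
  continuous_subtype_val.comp (mulTanhOrderIso.symm.continuous.comp continuous_projIci)

theorem strictMonoOn_invMulTanh : StrictMonoOn invMulTanh (Ici 0) := by
  intro x hx y hy hxy
  simp only [invMulTanh, projIci_of_mem hx, projIci_of_mem hy]
  exact mulTanhOrderIso.symm.strictMono hxy

theorem invMulTanh_mul_tanh {x : ℝ} (hx : 0 ≤ x) : invMulTanh (x * tanh x) = x := by
  have : projIci 0 (x * tanh x) = mulTanhOrderIso ⟨x, hx⟩ :=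
    projIci_of_mem (mul_nonneg hx (tanh_nonneg hx))
  rw [invMulTanh, this, OrderIso.symm_apply_apply]

theorem mul_tanh_invMulTanh {y : ℝ} (hy : 0 ≤ y) : invMulTanh y * tanh (invMulTanh y) = y := by
  obtain ⟨x, hx, rfl⟩ := exists_mul_tanh_eq hy
  rw [invMulTanh_mul_tanh hx]

theorem invMulTanh_zero : invMulTanh 0 = 0 := by
  simpa using invMulTanh_mul_tanh (le_refl (0 : ℝ))

theorem invMulTanh_pos {y : ℝ} (hy : 0 < y) : 0 < invMulTanh y := by
  refine (invMulTanh_nonneg y).lt_of_ne fun h => hy.ne ?_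
  rw [← mul_tanh_invMulTanh hy.le, ← h, zero_mul]

noncomputable def bruchFalk (y : ℝ) : ℝ := dslope tanh 0 (invMulTanh y)

theorem bruchFalk_zero : bruchFalk 0 = 1 := by
  rw [bruchFalk, invMulTanh_zero, dslope_tanh_zero_zero]

theorem bruchFalk_mul_tanh {x : ℝ} (hx : 0 < x) : bruchFalk (x * tanh x) = tanh x / x := by
  rw [bruchFalk, invMulTanh_mul_tanh hx.le, dslope_tanh_zero_of_ne hx.ne']

theorem bruchFalk_eq_div_invMulTanh_sq {y : ℝ} (hy : 0 < y) :
    bruchFalk y = y / invMulTanh y ^ 2 := by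
  have hx := invMulTanh_pos hy
  conv_lhs => rw [← mul_tanh_invMulTanh hy.le]
  rw [bruchFalk_mul_tanh hx]
  field_simp
  linarith [mul_tanh_invMulTanh hy.le]

theorem continuous_bruchFalk : Continuous bruchFalk :=
  continuous_dslope_tanh.comp continuous_invMulTanh

theorem strictAntiOn_bruchFalk : StrictAntiOn bruchFalk (Ici 0) :=
  strictAntiOn_dslope_tanh.comp_strictMonoOn strictMonoOn_invMulTanh
    fun y _ => invMulTanh_nonneg y

theorem bruchFalk_mem_Ioc {y : ℝ} (hy : 0 ≤ y) : bruchFalk y ∈ Ioc 0 1 := by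
  rcases hy.eq_or_lt with rfl | hy
  · simp [bruchFalk_zero]
  exact ⟨dslope_tanh_pos (invMulTanh_pos hy),
    bruchFalk_zero ▸ (strictAntiOn_bruchFalk self_mem_Ici hy.le hy).le⟩

theorem monotoneOn_mul_bruchFalk_div {β : ℝ} (hβ : 0 < β) :
    MonotoneOn (fun t => t * bruchFalk (β / t)) (Ioi 0) := by
  intro s hs t ht hst
  have hβs := div_pos hβ hs
  have hβt := div_pos hβ ht
  have key : ∀ {u : ℝ}, 0 < u → u * bruchFalk (β / u) = β / invMulTanh (β / u) ^ 2 := by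
    intro u hu
    rw [bruchFalk_eq_div_invMulTanh_sq (div_pos hβ hu)]
    field_simp
  dsimp only
  rw [key hs, key ht]
  have hle := strictMonoOn_invMulTanh.monotoneOn hβt.le hβs.le
    (div_le_div_of_nonneg_left hβ.le hs hst)
  have hpos := invMulTanh_pos hβt
  gcongr

theorem eq_bruchFalk_of_mul_tanh {g : ℝ → ℝ} (hg₀ : g 0 = 1)
    (hg : ∀ x, 0 < x → g (x * tanh x) = tanh x / x) {y : ℝ} (hy : 0 ≤ y) : g y = bruchFalk y := by
  obtain ⟨x, hx, rfl⟩ := exists_mul_tanh_eq hy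
  rcases hx.eq_or_lt with rfl | hx
  · rw [zero_mul, hg₀, bruchFalk_zero]
  · rw [hg x hx, bruchFalk_mul_tanh hx]

/-- The Bruch–Falk function: there is a unique function `f` on `[0, ∞)` with
`f(0) = 1` and `f(ξ tanh ξ) = (tanh ξ)/ξ` for `ξ > 0`; it is continuous, strictly
decreasing, takes values in `(0, 1]`, and for each `β > 0` the map `t ↦ t f(β/t)`
is nondecreasing on `(0, ∞)`. -/
theorem bruch_falk_function :
    ∃ f : ℝ → ℝ,
      (f 0 = 1 ∧ ∀ ξ : ℝ, 0 < ξ → f (ξ * Real.tanh ξ) = Real.tanh ξ / ξ) ∧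
      (∀ g : ℝ → ℝ,
        (g 0 = 1 ∧ ∀ ξ : ℝ, 0 < ξ → g (ξ * Real.tanh ξ) = Real.tanh ξ / ξ) →
        ∀ x : ℝ, 0 ≤ x → g x = f x) ∧
      ContinuousOn f (Set.Ici 0) ∧
      StrictAntiOn f (Set.Ici 0) ∧
      (∀ x : ℝ, 0 ≤ x → f x ∈ Set.Ioc (0 : ℝ) 1) ∧
      (∀ β : ℝ, 0 < β → MonotoneOn (fun t : ℝ => t * f (β / t)) (Set.Ioi 0)) :=
  ⟨bruchFalk, ⟨bruchFalk_zero, fun _ => bruchFalk_mul_tanh⟩,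
    fun _ hg _ => eq_bruchFalk_of_mul_tanh hg.1 hg.2, continuous_bruchFalk.continuousOn,
    strictAntiOn_bruchFalk, fun _ => bruchFalk_mem_Ioc, fun _ => monotoneOn_mul_bruchFalk_div⟩
end
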